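/- arXiv:2304.00255 — 5 statements merged into one kernel-verified Lean document; each statement's English description precedes it below -/
import Mathlib

section
/- Every finite forest with at least one edge has a distant leaf; that is, there exists a leaf v with unique neighbor w such that at most one neighbor of w is not a leaf. -/
/-!
Take a longest path `a w x …` in the forest. Acyclicity means a neighbor of the first vertex
that is not the second vertex lies off the path, so prepending it would give a longer path:
hence `a` is a leaf. Any neighbor `u ≠ x` of `w` can replace `a` to give another longest path,
so `u` is a leaf as well, and `x` is the only possible non-leaf neighbor of `w`.
-/

open scoped Classical

namespace SimpleGraph

variable {V : Type*} {G : SimpleGraph V}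

theorem IsAcyclic.isPath_cons_of_ne_snd (hG : G.IsAcyclic) {u v w : V} {p : G.Walk v w}
    (hp : p.IsPath) (h : G.Adj u v) (hu : u ≠ p.snd) : (Walk.cons h p).IsPath :=
  hp.cons fun hmem => hu (hG.eq_snd_of_adj_start hp h.symm hmem)

namespace Walk

def IsLongestPath {u v : V} (p : G.Walk u v) : Prop :=
  p.IsPath ∧ ∀ ⦃a b : V⦄ (q : G.Walk a b), q.IsPath → q.length ≤ p.length

variable {u v : V} {p : G.Walk u v}

theorem IsLongestPath.eq_snd_of_adj (hG : G.IsAcyclic) (hp : p.IsLongestPath) {x : V}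
    (h : G.Adj u x) : x = p.snd := by
  by_contra hx
  have := hp.2 _ (hG.isPath_cons_of_ne_snd hp.1 h.symm hx)
  simp at this

theorem IsLongestPath.degree_eq_one (hG : G.IsAcyclic) (hp : p.IsLongestPath) (hne : ¬p.Nil)
    [Fintype (G.neighborSet u)] : G.degree u = 1 :=
  degree_eq_one_iff_existsUnique_adj.2 ⟨p.snd, p.adj_snd hne, fun _ h => hp.eq_snd_of_adj hG h⟩

theorem IsLongestPath.cons_of_ne_snd (hG : G.IsAcyclic) {w : V} {h : G.Adj u w}
    {q : G.Walk w v} (hp : (cons h q).IsLongestPath) {u' : V} (h' : G.Adj u' w)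
    (hu' : u' ≠ q.snd) : (cons h' q).IsLongestPath :=
  ⟨hG.isPath_cons_of_ne_snd hp.1.of_cons h' hu', fun _ _ r hr => by simpa using hp.2 r hr⟩

end Walk

theorem exists_isLongestPath [Finite V] [Nonempty V] (G : SimpleGraph V) :
    ∃ (a b : V) (p : G.Walk a b), p.IsLongestPath := by
  cases nonempty_fintype V
  obtain ⟨v⟩ := ‹Nonempty V›
  have : Nonempty (Σ a b, G.Path a b) := ⟨⟨v, v, Path.nil⟩⟩
  obtain ⟨⟨a, b, p⟩, hmax⟩ := Finite.exists_max fun q : Σ a b, G.Path a b => q.2.2.1.length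
  exact ⟨a, b, p, p.2, fun x y q hq => hmax ⟨x, y, q, hq⟩⟩

end SimpleGraph

open SimpleGraph Walk

theorem stmt_0_general {V : Type*} [Fintype V]
    (G : SimpleGraph V) [DecidableRel G.Adj]
    (hforest : G.IsAcyclic) (hedge : G.edgeSet.Nonempty) :
    ∃ v w : V, G.Adj v w ∧ G.degree v = 1 ∧
      ((G.neighborFinset w).filter (fun u => G.degree u ≠ 1)).card ≤ 1 := by
  obtain ⟨x, y, hxy⟩ := ne_bot_iff_exists_adj.1 (edgeSet_nonempty.1 hedge)
  have : Nonempty V := ⟨x⟩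
  obtain ⟨a, b, p, hp⟩ := G.exists_isLongestPath
  cases p with
  | nil => simpa using hp.2 (cons hxy nil) (by simp [hxy.ne])
  | @cons _ w _ h q =>
    refine ⟨a, w, h, hp.degree_eq_one hforest not_nil_cons, ?_⟩
    have hsub : (G.neighborFinset w).filter (fun u => G.degree u ≠ 1) ⊆ {q.snd} := by
      intro u hu
      rw [Finset.mem_filter, mem_neighborFinset] at hu
      by_contra hne
      rw [Finset.mem_singleton] at hne
      exact hu.2 <| (hp.cons_of_ne_snd hforest hu.1.symm hne).degree_eq_one hforest not_nil_cons
    simpa using Finset.card_le_card hsub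

/-- A forest with at least one edge has a distant leaf: a leaf `v` with neighbor `w`
such that at most one neighbor of `w` is not a leaf. -/
theorem stmt_0 {V : Type*} [Fintype V] [DecidableEq V]
    (G : SimpleGraph V) [DecidableRel G.Adj]
    (hforest : G.IsAcyclic) (hedge : G.edgeSet.Nonempty) :
    ∃ v w : V, G.Adj v w ∧ G.degree v = 1 ∧
      ((G.neighborFinset w).filter (fun u => G.degree u ≠ 1)).card ≤ 1 :=
  stmt_0_general G hforest hedge
end

section
/- In a tree, if v_1, v_2, ..., v_r is an induced path of maximal length, then v_r is a distant leaf: all neighbors of v_{r-1} other than v_{r-2} are leaves. -/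
/-!
A vertex off the path that is adjacent to two path vertices would close a cycle, because the
path is connected. So a neighbour of the last vertex off the path could be appended to it,
contradicting maximality; hence the last vertex is a leaf. A neighbour `u ≠ p (r - 3)` of
`p (r - 2)` is either `p (r - 1)` or lies off the path, and then replacing `p (r - 1)` by `u`
gives another maximal induced path, whose last vertex `u` is a leaf by the first part.
-/

open scoped Classical

/-- `p 0, p 1, ..., p (r-1)` is an induced path in `G`: the vertices are distinct and
two of them are adjacent iff they are consecutive. -/
def IsInducedPath {V : Type*} (G : SimpleGraph V) {r : ℕ} (p : Fin r → V) : Prop :=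
  Function.Injective p ∧
    ∀ i j : Fin r, G.Adj (p i) (p j) ↔ ((i : ℕ) + 1 = j ∨ (j : ℕ) + 1 = i)

namespace SimpleGraph

variable {V : Type*} {G : SimpleGraph V}

theorem IsAcyclic.eq_of_adj_of_adj_of_preconnected (hG : G.IsAcyclic) {S : Set V}
    (hS : (G.induce S).Preconnected) {x a b : V} (hx : x ∉ S) (ha : a ∈ S) (hb : b ∈ S)
    (hxa : G.Adj x a) (hxb : G.Adj x b) : a = b := by
  by_contra hab
  -- without the edge `xb`, `x` still reaches `b` through `a` and `S`, so `xb` is no bridge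
  let f : G.induce S →g G.deleteEdges {s(x, b)} :=
    ⟨Subtype.val, fun {u v} huv => (deleteEdges_adj ..).2
      ⟨huv, fun h => hx (by grind [Sym2.eq_iff])⟩⟩
  have hxa' : (G.deleteEdges {s(x, b)}).Adj x a :=
    (deleteEdges_adj ..).2 ⟨hxa, by simp [hab, hxa.ne']⟩
  exact isAcyclic_iff_forall_adj_isBridge.1 hG hxb <|
    hxa'.reachable.trans ((hS ⟨a, ha⟩ ⟨b, hb⟩).map f)

end SimpleGraph

open SimpleGraph

namespace IsInducedPath

variable {V : Type*} {G : SimpleGraph V}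

def toEmbedding {r : ℕ} {p : Fin r → V} (hp : IsInducedPath G p) : pathGraph r ↪g G :=
  ⟨⟨p, hp.1⟩, by simp [pathGraph_adj, hp.2]⟩

theorem preconnected_induce_range {r : ℕ} {p : Fin r → V} (hp : IsInducedPath G p) :
    (G.induce (Set.range p)).Preconnected :=
  hp.toEmbedding.isoInduceRange.preconnected_iff.1 (pathGraph_preconnected r)

theorem eq_of_adj_of_adj_of_notMem_range (hG : G.IsAcyclic) {r : ℕ} {p : Fin r → V}
    (hp : IsInducedPath G p) {x : V} (hx : x ∉ Set.range p) {i j : Fin r}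
    (hi : G.Adj (p i) x) (hj : G.Adj (p j) x) : i = j :=
  hp.1 <| hG.eq_of_adj_of_adj_of_preconnected hp.preconnected_induce_range hx
    ⟨i, rfl⟩ ⟨j, rfl⟩ hi.symm hj.symm

theorem init {n : ℕ} {p : Fin (n + 1) → V} (hp : IsInducedPath G p) :
    IsInducedPath G (Fin.init p) :=
  ⟨hp.1.comp (Fin.castSucc_injective n), fun i j => by
    simpa [Fin.init] using hp.2 i.castSucc j.castSucc⟩

theorem snoc (hG : G.IsAcyclic) {n : ℕ} {p : Fin (n + 1) → V} (hp : IsInducedPath G p)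
    {x : V} (hx : x ∉ Set.range p) (hadj : G.Adj (p (Fin.last n)) x) :
    IsInducedPath G (Fin.snoc p x : Fin (n + 2) → V) := by
  have hlast : ∀ i, G.Adj (p i) x ↔ (i : ℕ) + 1 = n + 1 := fun i =>
    ⟨fun h => by simp [hp.eq_of_adj_of_adj_of_notMem_range hG hx h hadj],
      fun h => by rwa [show i = Fin.last n from Fin.ext (by simpa using h)]⟩
  refine ⟨Fin.snoc_injective_of_injective hp.1 hx, fun i j => ?_⟩
  induction i using Fin.lastCases <;> induction j using Fin.lastCases <;>
    simp [hp.2, hlast, G.adj_comm x] <;> omega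

theorem eq_of_adj_last (hG : G.IsAcyclic) {n : ℕ} {p : Fin (n + 2) → V}
    (hp : IsInducedPath G p) (hmax : ∀ q : Fin (n + 3) → V, ¬ IsInducedPath G q) {u : V}
    (hu : G.Adj (p (Fin.last (n + 1))) u) : u = p (Fin.last n).castSucc := by
  by_cases hx : u ∈ Set.range p
  · obtain ⟨j, rfl⟩ := hx
    have hj := (hp.2 _ _).1 hu
    exact congrArg p (Fin.ext (by simp only [Fin.val_last, Fin.val_castSucc] at hj ⊢; omega))
  · exact absurd (hp.snoc hG hx hu) (hmax _)

theorem existsUnique_adj_last (hG : G.IsAcyclic) {n : ℕ} {p : Fin (n + 2) → V}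
    (hp : IsInducedPath G p) (hmax : ∀ q : Fin (n + 3) → V, ¬ IsInducedPath G q) :
    ∃! u, G.Adj (p (Fin.last (n + 1))) u :=
  ⟨_, (hp.2 _ _).2 (by simp), fun _ hu => hp.eq_of_adj_last hG hmax hu⟩

end IsInducedPath

/-- In a tree, the last vertex of an induced path of maximal length is a distant leaf:
it has degree one, and every neighbor of the previous vertex other than the
second-to-previous vertex is a leaf. -/
theorem stmt_1 {V : Type*} [Fintype V]
    (G : SimpleGraph V) [DecidableRel G.Adj] (htree : G.IsTree)
    (r : ℕ) (hr : 3 ≤ r) (p : Fin r → V) (hp : IsInducedPath G p)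
    (hmax : ∀ (s : ℕ), r < s → ∀ q : Fin s → V, ¬ IsInducedPath G q) :
    G.degree (p ⟨r - 1, by omega⟩) = 1 ∧
      ∀ u : V, G.Adj (p ⟨r - 2, by omega⟩) u → u ≠ p ⟨r - 3, by omega⟩ →
        G.degree u = 1 := by
  obtain ⟨n, rfl⟩ : ∃ n, r = n + 3 := ⟨r - 3, by omega⟩
  have hG := htree.isAcyclic
  have hmax' : ∀ q : Fin (n + 4) → V, ¬ IsInducedPath G q := hmax _ (by omega)
  have hlast := hp.existsUnique_adj_last hG hmax'
  refine ⟨degree_eq_one_iff_existsUnique_adj.2 hlast, fun u hu hun => ?_⟩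
  rw [degree_eq_one_iff_existsUnique_adj]
  by_cases hx : u ∈ Set.range p
  · obtain ⟨j, rfl⟩ := hx
    have hj := (hp.2 _ _).1 hu
    obtain rfl : j = Fin.last (n + 2) := Fin.ext (by
      have : (j : ℕ) ≠ n := fun h => hun (congrArg p (Fin.ext h))
      simp only [Fin.val_last] at hj ⊢; omega)
    exact hlast
  · have hx' : u ∉ Set.range (Fin.init p) := fun ⟨i, hi⟩ => hx ⟨_, hi⟩
    simpa using (hp.init.snoc hG hx' hu).existsUnique_adj_last hG hmax'
end

section
/- Let G be a forest and 2 ≤ k ≤ ν(G). Then aim(G,k) ≤ aim(G,k-1)+1. -/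
open scoped Classical

noncomputable section

/-- `M` is a matching of `G`: a set of edges of `G` that are pairwise vertex-disjoint. -/
def IsMatchingSet {V : Type*} (G : SimpleGraph V) (M : Finset (Sym2 V)) : Prop :=
  (∀ e ∈ M, e ∈ G.edgeSet) ∧
    ∀ e ∈ M, ∀ f ∈ M, e ≠ f → ∀ v : V, v ∈ e → v ∉ f

/-- The matching number `ν(G)`: the maximum size of a matching of `G`. -/
def matchingNumber {V : Type*} [Fintype V] (G : SimpleGraph V) : ℕ :=
  sSup {k | ∃ M : Finset (Sym2 V), IsMatchingSet G M ∧ M.card = k}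

/-- Two edges `e, f` form a gap in `G`: they are vertex-disjoint and no edge of `G`
joins an endpoint of `e` to an endpoint of `f` (an induced matching of size 2). -/
def IsGap {V : Type*} (G : SimpleGraph V) (e f : Sym2 V) : Prop :=
  (∀ v : V, v ∈ e → v ∉ f) ∧ ∀ u v : V, u ∈ e → v ∈ f → ¬ G.Adj u v

/-- The set of vertices covered by a set of edges `M`. -/
def matchVerts {V : Type*} (M : Finset (Sym2 V)) : Set V := {v | ∃ e ∈ M, v ∈ e}

/-- `M` is a `k`-admissible matching of `G`: a matching admitting a partition into
nonempty parts `M₁, …, M_r` such that edges from distinct parts form gaps in `G`,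
`|M₁| + ⋯ + |M_r| ≤ r + k - 1`, and the induced subgraph on the vertices of each
part is a forest. -/
def IsAdmissibleMatching {V : Type*} (G : SimpleGraph V) (k : ℕ)
    (M : Finset (Sym2 V)) : Prop :=
  IsMatchingSet G M ∧
    ∃ P : Finset (Finset (Sym2 V)),
      (∀ p ∈ P, p.Nonempty) ∧
      (∀ p ∈ P, ∀ q ∈ P, p ≠ q → Disjoint p q) ∧
      P.biUnion id = M ∧
      (∀ p ∈ P, ∀ q ∈ P, p ≠ q → ∀ e ∈ p, ∀ f ∈ q, IsGap G e f) ∧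
      M.card + 1 ≤ P.card + k ∧
      ∀ p ∈ P, (SimpleGraph.induce (matchVerts p) G).IsAcyclic

/-- The `k`-admissible matching number `aim(G,k)`: the maximum size of a
`k`-admissible matching of `G` (`0` if none exists). -/
def aim {V : Type*} [Fintype V] (G : SimpleGraph V) (k : ℕ) : ℕ :=
  sSup {m | ∃ M : Finset (Sym2 V), IsAdmissibleMatching G k M ∧ M.card = m}

/-!
Let `M` be a `k`-admissible matching with parts `M₁, …, M_r`. If every part is a single edge, then
`|M| = r ≤ r + k - 2`, so `M` itself is `(k-1)`-admissible. Otherwise some part has two edges; deleting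
one of them keeps every part nonempty, lowers `|M|` by one and keeps `r`, so the smaller matching is
`(k-1)`-admissible.
-/

section

variable {V : Type*} {G : SimpleGraph V}

lemma IsMatchingSet.mono {M N : Finset (Sym2 V)} (hM : IsMatchingSet G M) (hNM : N ⊆ M) :
    IsMatchingSet G N :=
  ⟨fun e he => hM.1 e (hNM he), fun e he f hf => hM.2 e (hNM he) f (hNM hf)⟩

lemma matchVerts_mono {M N : Finset (Sym2 V)} (hNM : N ⊆ M) : matchVerts N ⊆ matchVerts M :=
  fun _ ⟨e, he, hv⟩ => ⟨e, hNM he, hv⟩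

structure IsAdmissiblePartition (G : SimpleGraph V) (k : ℕ) (M : Finset (Sym2 V))
    (P : Finset (Finset (Sym2 V))) : Prop where
  nonempty : ∀ p ∈ P, p.Nonempty
  disjoint : ∀ p ∈ P, ∀ q ∈ P, p ≠ q → Disjoint p q
  biUnion_eq : P.biUnion id = M
  isGap : ∀ p ∈ P, ∀ q ∈ P, p ≠ q → ∀ e ∈ p, ∀ f ∈ q, IsGap G e f
  card_add_one_le : M.card + 1 ≤ P.card + k
  isAcyclic : ∀ p ∈ P, (G.induce (matchVerts p)).IsAcyclic

lemma isAdmissibleMatching_iff {k : ℕ} {M : Finset (Sym2 V)} :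
    IsAdmissibleMatching G k M ↔ IsMatchingSet G M ∧ ∃ P, IsAdmissiblePartition G k M P := by
  constructor
  · rintro ⟨hM, P, h₁, h₂, h₃, h₄, h₅, h₆⟩
    exact ⟨hM, P, h₁, h₂, h₃, h₄, h₅, h₆⟩
  · rintro ⟨hM, P, h₁, h₂, h₃, h₄, h₅, h₆⟩
    exact ⟨hM, P, h₁, h₂, h₃, h₄, h₅, h₆⟩

lemma card_le_aim [Fintype V] {k : ℕ} {M : Finset (Sym2 V)} (hM : IsAdmissibleMatching G k M) :
    M.card ≤ aim G k :=
  le_csSup ⟨Fintype.card (Sym2 V), by rintro _ ⟨N, -, rfl⟩; exact N.card_le_univ⟩ ⟨M, hM, rfl⟩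

namespace IsAdmissiblePartition

variable {k : ℕ} {M : Finset (Sym2 V)} {P : Finset (Finset (Sym2 V))}

lemma card_eq_sum (hP : IsAdmissiblePartition G k M P) : M.card = ∑ p ∈ P, p.card := by
  rw [← hP.biUnion_eq]
  exact Finset.card_biUnion hP.disjoint

lemma pred_of_forall_card_le_one (hP : IsAdmissiblePartition G k M P) (hk : 2 ≤ k)
    (hsingle : ∀ p ∈ P, p.card ≤ 1) : IsAdmissiblePartition G (k - 1) M P := by
  have hMP : M.card ≤ P.card := by
    rw [hP.card_eq_sum, Finset.card_eq_sum_ones]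
    exact Finset.sum_le_sum hsingle
  exact { hP with card_add_one_le := by omega }

lemma eq_of_mem_of_mem {p q : Finset (Sym2 V)} {e : Sym2 V} (hP : IsAdmissiblePartition G k M P)
    (hp : p ∈ P) (hq : q ∈ P) (hep : e ∈ p) (heq : e ∈ q) : p = q := by
  by_contra hpq
  exact Finset.disjoint_left.mp (hP.disjoint p hp q hq hpq) hep heq

lemma erase_nonempty {p : Finset (Sym2 V)} {e : Sym2 V} (hP : IsAdmissiblePartition G k M P)
    (hp : p ∈ P) (he : e ∈ p) (hcard : 2 ≤ p.card) : ∀ q ∈ P, (q.erase e).Nonempty := by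
  intro q hq
  by_cases heq : e ∈ q
  · rw [← hP.eq_of_mem_of_mem hp hq he heq, ← Finset.card_pos, Finset.card_erase_of_mem he]
    omega
  · rw [Finset.erase_eq_of_notMem heq]
    exact hP.nonempty q hq

lemma image_erase {e : Sym2 V} (hP : IsAdmissiblePartition G k M P) (he : e ∈ M)
    (hne : ∀ q ∈ P, (q.erase e).Nonempty) :
    IsAdmissiblePartition G (k - 1) (M.erase e) (P.image (·.erase e)) := by
  have hinj : Set.InjOn (·.erase e) (P : Set (Finset (Sym2 V))) := by
    intro p hp q hq hpq
    by_contra hne'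
    obtain ⟨f, hf⟩ := hne p hp
    have hfq : f ∈ q.erase e := (show p.erase e = q.erase e from hpq) ▸ hf
    exact Finset.disjoint_left.mp (hP.disjoint p hp q hq hne') (Finset.mem_of_mem_erase hf)
      (Finset.mem_of_mem_erase hfq)
  have hM : 0 < M.card := Finset.card_pos.mpr ⟨e, he⟩
  have hcard := hP.card_add_one_le
  refine ⟨?_, ?_, ?_, ?_, ?_, ?_⟩
  · simpa using hne
  · simp only [Finset.mem_image]
    rintro _ ⟨p, hp, rfl⟩ _ ⟨q, hq, rfl⟩ hpq
    exact (hP.disjoint p hp q hq (by rintro rfl; exact hpq rfl)).mono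
      (Finset.erase_subset e p) (Finset.erase_subset e q)
  · rw [Finset.image_biUnion, ← hP.biUnion_eq]
    ext f
    simp only [Finset.mem_biUnion, Finset.mem_erase, id]
    tauto
  · simp only [Finset.mem_image]
    rintro _ ⟨p, hp, rfl⟩ _ ⟨q, hq, rfl⟩ hpq f hf g hg
    exact hP.isGap p hp q hq (by rintro rfl; exact hpq rfl) f (Finset.mem_of_mem_erase hf) g
      (Finset.mem_of_mem_erase hg)
  · rw [Finset.card_erase_of_mem he, Finset.card_image_of_injOn hinj]
    omega
  · simp only [Finset.mem_image]
    rintro _ ⟨p, hp, rfl⟩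
    exact (hP.isAcyclic p hp).embedding
      (SimpleGraph.induceHomOfLE G (matchVerts_mono (Finset.erase_subset e p)))

end IsAdmissiblePartition

end

theorem stmt_6_general {V : Type*} [Fintype V] (G : SimpleGraph V)
    (k : ℕ) (h1 : 2 ≤ k) :
    aim G k ≤ aim G (k - 1) + 1 := by
  refine csSup_le' ?_
  rintro _ ⟨M, hadm, rfl⟩
  obtain ⟨hM, P, hP⟩ := isAdmissibleMatching_iff.mp hadm
  by_cases hsingle : ∀ p ∈ P, p.card ≤ 1
  · have hsame := card_le_aim
      (isAdmissibleMatching_iff.mpr ⟨hM, P, hP.pred_of_forall_card_le_one h1 hsingle⟩)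
    omega
  · push Not at hsingle
    obtain ⟨p, hp, hcard⟩ := hsingle
    obtain ⟨e, he⟩ := hP.nonempty p hp
    have heM : e ∈ M := hP.biUnion_eq ▸ Finset.mem_biUnion.mpr ⟨p, hp, he⟩
    have hsmaller := card_le_aim (isAdmissibleMatching_iff.mpr
      ⟨hM.mono (M.erase_subset e), _, hP.image_erase heM (hP.erase_nonempty hp he hcard)⟩)
    rw [Finset.card_erase_of_mem heM] at hsmaller
    omega

/-- For a forest `G` and `2 ≤ k ≤ ν(G)`, `aim(G,k) ≤ aim(G,k-1) + 1`. -/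
theorem stmt_6 {V : Type*} [Fintype V] (G : SimpleGraph V)
    (hforest : G.IsAcyclic) (k : ℕ) (h1 : 2 ≤ k) (h2 : k ≤ matchingNumber G) :
    aim G k ≤ aim G (k - 1) + 1 :=
  stmt_6_general G k h1

end
end

section
/- Let I ⊂ K[x_1,...,x_{n-1}] be a squarefree monomial ideal and 1 < k ≤ ν(I). In S = K[x_1,...,x_n], the k-th squarefree power satisfies (I, x_n)^{[k]} = I^{[k]} + x_n · I^{[k-1]}. -/
/-!
Write `x = X j`, let `I` be generated by polynomials free of `x`, and `J = I + (x)`. Two operators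
carry membership in powers of `J` back to powers of `I`: the substitution `x ↦ 0` maps `J ^ m`
onto `I ^ m` and fixes every polynomial free of `x`, while `∂/∂x` maps `J ^ (m + 1)` into `J ^ m`
and preserves every `I ^ m`. For `u` free of `x`, substituting `x ↦ 0` into `∂(x u)/∂x` gives
back `u`; hence `x u ∈ J ^ (m + 1)` and `x u ∈ I ^ m` each force `u ∈ I ^ m`. Splitting a
squarefree monomial according to whether it contains `x` then gives both inclusions.
-/

open scoped Classical
open MvPolynomial

noncomputable section

/-- The graded maximal ideal `(x_1, …, x_n)`. -/
def maxIdeal (K : Type*) [Field K] (n : ℕ) : Ideal (MvPolynomial (Fin n) K) :=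
  Ideal.span (Set.range X)

/-- The `k`-th squarefree power `I^{[k]}` of a squarefree monomial ideal `I`:
the ideal generated by the squarefree monomials lying in `I^k`. -/
def sqPow {K : Type*} [Field K] {n : ℕ} (I : Ideal (MvPolynomial (Fin n) K)) (k : ℕ) :
    Ideal (MvPolynomial (Fin n) K) :=
  Ideal.span {f | (∃ s : Finset (Fin n), f = ∏ i ∈ s, X i) ∧ f ∈ I ^ k}

/-- The monomial grade `ν(I)`: the maximum length of a regular sequence of
monomials contained in `I`. -/
def monomialGrade {K : Type*} [Field K] {n : ℕ}
    (I : Ideal (MvPolynomial (Fin n) K)) : ℕ :=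
  sSup {k | ∃ rs : List (MvPolynomial (Fin n) K), rs.length = k ∧
    (∀ r ∈ rs, r ∈ I ∧ ∃ d c, r = monomial d c) ∧
    RingTheory.Sequence.IsRegular (MvPolynomial (Fin n) K) rs}

namespace Derivation

variable {R A : Type*} [CommSemiring R] [CommSemiring A] [Algebra R A]

theorem apply_mem_span (D : Derivation R A A) {T : Set A} (hT : ∀ t ∈ T, D t = 0) {a : A}
    (ha : a ∈ Ideal.span T) : D a ∈ Ideal.span T := by
  induction ha using Submodule.span_induction with
  | mem t ht => simp [hT t ht]
  | zero => simp
  | add a b _ _ hDa hDb => simpa using add_mem hDa hDb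
  | smul r a ha hDa =>
    rw [smul_eq_mul, leibniz, smul_eq_mul, smul_eq_mul]
    exact add_mem (Ideal.mul_mem_left _ r hDa) (Ideal.mul_mem_right _ _ ha)

theorem apply_mem_mul_pow (D : Derivation R A A) {I L : Ideal A} (hD : ∀ a ∈ I, D a ∈ L) :
    ∀ m : ℕ, ∀ a ∈ I ^ (m + 1), D a ∈ L * I ^ m
  | 0, a, ha => by simpa using hD a (by simpa using ha)
  | m + 1, a, ha => by
    rw [pow_succ] at ha
    refine Submodule.mul_induction_on ha (fun b hb c hc => ?_) fun x y hx hy => by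
      simpa using add_mem hx hy
    have hb' : D c * b ∈ L * I ^ (m + 1) := Ideal.mul_mem_mul (hD c hc) hb
    have hc' : D b * c ∈ L * I ^ (m + 1) := by
      rw [pow_succ, ← mul_assoc]
      exact Ideal.mul_mem_mul (apply_mem_mul_pow D hD m b hb) hc
    rw [leibniz, smul_eq_mul, smul_eq_mul, mul_comm b, mul_comm c]
    exact add_mem hb' hc'

end Derivation

theorem Ideal.mul_mem_sup_span_singleton_pow_succ {A : Type*} [CommSemiring A] {I : Ideal A}
    {x p : A} {m : ℕ} (hp : p ∈ I ^ m) : x * p ∈ (I ⊔ Ideal.span {x}) ^ (m + 1) := by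
  rw [pow_succ']
  exact Ideal.mul_mem_mul (Ideal.mem_sup_right (Ideal.mem_span_singleton_self x))
    (Ideal.pow_right_mono le_sup_left m hp)

namespace MvPolynomial

variable {σ R : Type*} [CommSemiring R]

theorem prod_X_mem_supported {s : Finset σ} {t : Set σ} (h : ↑s ⊆ t) :
    ∏ i ∈ s, (X i : MvPolynomial σ R) ∈ supported R t :=
  Subalgebra.prod_mem _ fun i hi => Algebra.subset_adjoin ⟨i, h hi, rfl⟩

section killVar

variable [DecidableEq σ]

def killVar (j : σ) : MvPolynomial σ R →ₐ[R] MvPolynomial σ R :=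
  aeval (Function.update X j 0)

@[simp]
theorem killVar_X_self (j : σ) : killVar j (X j : MvPolynomial σ R) = 0 := by
  simp [killVar]

theorem killVar_of_mem_supported {j : σ} {p : MvPolynomial σ R}
    (hp : p ∈ supported R {j}ᶜ) : killVar j p = p := by
  suffices supported R {j}ᶜ ≤ AlgHom.equalizer (killVar j) (AlgHom.id R _) from this hp
  refine Algebra.adjoin_le ?_
  rintro _ ⟨i, hi, rfl⟩
  simp [killVar, Function.update_of_ne (Set.mem_compl_singleton_iff.mp hi)]

end killVar

theorem pderiv_of_mem_supported {j : σ} {p : MvPolynomial σ R}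
    (hp : p ∈ supported R {j}ᶜ) : pderiv j p = 0 :=
  pderiv_eq_zero_of_notMem_vars fun hj => mem_supported.mp hp hj rfl

variable [DecidableEq σ] {T : Set (MvPolynomial σ R)} {j : σ}

theorem map_killVar_span (hT : T ⊆ supported R {j}ᶜ) :
    (Ideal.span T).map (killVar j) = Ideal.span T := by
  rw [Ideal.map_span, Set.image_congr fun t ht => killVar_of_mem_supported (hT ht), Set.image_id']

theorem map_killVar_sup_span_X_pow (hT : T ⊆ supported R {j}ᶜ) (m : ℕ) :
    ((Ideal.span T ⊔ Ideal.span {X j}) ^ m).map (killVar j) = Ideal.span T ^ m := by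
  rw [Ideal.map_pow, Ideal.map_sup, map_killVar_span hT, Ideal.map_span, Set.image_singleton,
    killVar_X_self, Ideal.span_singleton_eq_bot.mpr rfl, sup_bot_eq]

theorem killVar_pderiv_X_mul {p : MvPolynomial σ R} (hp : p ∈ supported R {j}ᶜ) :
    killVar j (pderiv j (X j * p)) = p := by
  simp [Derivation.leibniz, killVar_of_mem_supported hp]

theorem mem_pow_of_mem_sup_span_X_pow (hT : T ⊆ supported R {j}ᶜ) {p : MvPolynomial σ R}
    (hp : p ∈ supported R {j}ᶜ) {m : ℕ} (h : p ∈ (Ideal.span T ⊔ Ideal.span {X j}) ^ m) :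
    p ∈ Ideal.span T ^ m := by
  rw [← killVar_of_mem_supported hp, ← map_killVar_sup_span_X_pow hT]
  exact Ideal.mem_map_of_mem _ h

theorem mem_pow_of_X_mul_mem_sup_span_X_pow_succ (hT : T ⊆ supported R {j}ᶜ)
    {p : MvPolynomial σ R} (hp : p ∈ supported R {j}ᶜ) {m : ℕ}
    (h : X j * p ∈ (Ideal.span T ⊔ Ideal.span {X j}) ^ (m + 1)) : p ∈ Ideal.span T ^ m := by
  have hD := (pderiv j).apply_mem_mul_pow (L := ⊤) (fun _ _ => trivial) m _ h
  rw [Ideal.top_mul] at hD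
  rw [← killVar_pderiv_X_mul hp, ← map_killVar_sup_span_X_pow hT]
  exact Ideal.mem_map_of_mem _ hD

theorem mem_pow_of_X_mul_mem_pow (hT : T ⊆ supported R {j}ᶜ) {p : MvPolynomial σ R}
    (hp : p ∈ supported R {j}ᶜ) {m : ℕ} (h : X j * p ∈ Ideal.span T ^ m) :
    p ∈ Ideal.span T ^ m := by
  cases m with
  | zero => simp
  | succ m =>
    have hD := (pderiv j).apply_mem_mul_pow
      (fun _ => (pderiv j).apply_mem_span fun t ht => pderiv_of_mem_supported (hT ht)) m _ h
    rw [← pow_succ'] at hD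
    rw [← killVar_pderiv_X_mul hp, ← map_killVar_span hT, ← Ideal.map_pow]
    exact Ideal.mem_map_of_mem _ hD

section sqPow

variable {K : Type*} [Field K] {n : ℕ}

theorem sqPow_mono {I J : Ideal (MvPolynomial (Fin n) K)} (h : I ≤ J) (k : ℕ) :
    sqPow I k ≤ sqPow J k :=
  Ideal.span_mono fun _ ⟨hsq, hf⟩ => ⟨hsq, Ideal.pow_right_mono h k hf⟩

theorem prod_X_mem_sqPow {I : Ideal (MvPolynomial (Fin n) K)} {s : Finset (Fin n)} {k : ℕ}
    (h : ∏ i ∈ s, X i ∈ I ^ k) : ∏ i ∈ s, X i ∈ sqPow I k :=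
  Ideal.subset_span ⟨⟨s, rfl⟩, h⟩

theorem prod_X_erase_mem_supported (s : Finset (Fin n)) (j : Fin n) :
    ∏ i ∈ s.erase j, (X i : MvPolynomial (Fin n) K) ∈ supported K {j}ᶜ :=
  prod_X_mem_supported fun _ hi h => Finset.notMem_erase j s (h ▸ hi)

theorem sqPow_sup_span_X_succ {T : Set (MvPolynomial (Fin n) K)} {j : Fin n}
    (hT : T ⊆ supported K {j}ᶜ) (m : ℕ) :
    sqPow (Ideal.span T ⊔ Ideal.span {X j}) (m + 1) =
      sqPow (Ideal.span T) (m + 1) ⊔ Ideal.span {X j} * sqPow (Ideal.span T) m := by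
  refine le_antisymm (Ideal.span_le.mpr ?_) (sup_le (sqPow_mono le_sup_left _) ?_)
  · rintro _ ⟨⟨s, rfl⟩, hs⟩
    by_cases hj : j ∈ s
    · rw [← Finset.mul_prod_erase s X hj] at hs ⊢
      exact Ideal.mem_sup_right (Ideal.mul_mem_mul (Ideal.mem_span_singleton_self _)
        (prod_X_mem_sqPow (mem_pow_of_X_mul_mem_sup_span_X_pow_succ hT
          (prod_X_erase_mem_supported s j) hs)))
    · exact Ideal.mem_sup_left (prod_X_mem_sqPow (mem_pow_of_mem_sup_span_X_pow hT
        (prod_X_mem_supported fun _ hi h => hj (h ▸ hi)) hs))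
  · rw [sqPow, Ideal.span_mul_span', Ideal.span_le]
    rintro _ ⟨_, rfl, _, ⟨⟨s, rfl⟩, hs⟩, rfl⟩
    dsimp only
    by_cases hj : j ∈ s
    · refine Ideal.mul_mem_left _ _ (prod_X_mem_sqPow ?_)
      rw [← Finset.mul_prod_erase s X hj] at hs ⊢
      exact Ideal.mul_mem_sup_span_singleton_pow_succ
        (mem_pow_of_X_mul_mem_pow hT (prod_X_erase_mem_supported s j) hs)
    · rw [← Finset.prod_insert hj]
      refine prod_X_mem_sqPow ?_
      rw [Finset.prod_insert hj]
      exact Ideal.mul_mem_sup_span_singleton_pow_succ hs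

end sqPow

end MvPolynomial

theorem stmt_9_general (K : Type*) [Field K] (n : ℕ)
    (I : Ideal (MvPolynomial (Fin (n + 1)) K))
    (A : Set (Finset (Fin (n + 1)))) (hA : ∀ s ∈ A, Fin.last n ∉ s)
    (hI : I = Ideal.span ((fun s : Finset (Fin (n + 1)) => ∏ i ∈ s, X i) '' A))
    (k : ℕ) (hk1 : 1 < k) :
    sqPow (I ⊔ Ideal.span {(X (Fin.last n) : MvPolynomial (Fin (n + 1)) K)}) k =
      sqPow I k ⊔
        Ideal.span {(X (Fin.last n) : MvPolynomial (Fin (n + 1)) K)} * sqPow I (k - 1) := by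
  obtain ⟨m, rfl⟩ : ∃ m, k = m + 1 := ⟨k - 1, by omega⟩
  subst hI
  refine sqPow_sup_span_X_succ ?_ m
  rintro _ ⟨s, hs, rfl⟩
  exact prod_X_mem_supported fun _ hi h => hA s hs (h ▸ hi)

/-- For a squarefree monomial ideal `I ⊂ K[x_1,…,x_n]` not involving the last
variable and `1 < k ≤ ν(I)`, in `S = K[x_1,…,x_{n+1}]` one has
`(I, x_{n+1})^{[k]} = I^{[k]} + x_{n+1}·I^{[k-1]}`. -/
theorem stmt_9 (K : Type*) [Field K] (n : ℕ)
    (I : Ideal (MvPolynomial (Fin (n + 1)) K))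
    (A : Set (Finset (Fin (n + 1)))) (hA : ∀ s ∈ A, Fin.last n ∉ s)
    (hI : I = Ideal.span ((fun s : Finset (Fin (n + 1)) => ∏ i ∈ s, X i) '' A))
    (k : ℕ) (hk1 : 1 < k) (hk2 : k ≤ monomialGrade I) :
    sqPow (I ⊔ Ideal.span {(X (Fin.last n) : MvPolynomial (Fin (n + 1)) K)}) k =
      sqPow I k ⊔
        Ideal.span {(X (Fin.last n) : MvPolynomial (Fin (n + 1)) K)} * sqPow I (k - 1) :=
  stmt_9_general K n I A hA hI k hk1

end
end

section
/- Let G be a forest with distant leaf n and distant edge {n-1,n}. Let G_1 = G restricted to V(G)\{n} and G_2 = G restricted to V(G)\{n-1,n}. Then for all 1 ≤ k ≤ ν(G), I(G)^{[k]} = I(G_1)^{[k]} + x_n x_{n-1} I(G_2)^{[k-1]}, where I(G_2)^{[0]} = (1). -/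
/-!
A `k`-matching `M` of `G` either avoids the leaf `v`, and is then a `k`-matching of `G - v`, or it
covers `v`; since `v` has the single neighbour `w`, it then contains the edge `{w, v}`, and
`M' = M \ {{w, v}}` is a `(k-1)`-matching of `G - {v, w}` with `x_{V(M)} = x_v x_w x_{V(M')}`.
Conversely, adding `{w, v}` to a matching of `G - {v, w}` gives a matching of `G`.
-/

open scoped Classical
open MvPolynomial RingTheory

noncomputable section

/-- The `k`-th squarefree power `I(G)^{[k]}` of the edge ideal of a graph `G` on `Fin n`:
the ideal generated by the monomials `x_{V(M)}` for all `k`-matchings `M` of `G`.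
For `k = 0` this is the unit ideal. -/
def edgeIdealSqPow (K : Type*) [Field K] {n : ℕ} (G : SimpleGraph (Fin n)) (k : ℕ) :
    Ideal (MvPolynomial (Fin n) K) :=
  Ideal.span {f | ∃ M : Finset (Sym2 (Fin n)), IsMatchingSet G M ∧ M.card = k ∧
    f = ∏ v ∈ Finset.univ.filter (fun v => ∃ e ∈ M, v ∈ e), X v}

/-- The depth of `S/I` : the maximum length of an `S/I`-regular sequence contained in
the graded maximal ideal. -/
def depthQuot {K : Type*} [Field K] {n : ℕ} (I : Ideal (MvPolynomial (Fin n) K)) : ℕ :=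
  sSup {d | ∃ rs : List (MvPolynomial (Fin n) K), rs.length = d ∧
    (∀ r ∈ rs, r ∈ maxIdeal K n) ∧
    RingTheory.Sequence.IsRegular (MvPolynomial (Fin n) K ⧸ I) rs}

/-- The normalized depth function of the edge ideal of `G`:
`g_{I(G)}(k) = depth(S/I(G)^{[k]}) - (2k-1)`. -/
def gEdge (K : Type*) [Field K] {n : ℕ} (G : SimpleGraph (Fin n)) (k : ℕ) : ℤ :=
  (depthQuot (edgeIdealSqPow K G k) : ℤ) - (2 * k - 1)


/-- The graph obtained from `G` by deleting the vertices in `s` (keeping the same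
vertex type; deleted vertices become isolated). -/
def delV {V : Type*} (G : SimpleGraph V) (s : Set V) : SimpleGraph V where
  Adj u v := G.Adj u v ∧ u ∉ s ∧ v ∉ s
  symm := ⟨fun u v h => ⟨h.1.symm, h.2.2, h.2.1⟩⟩
  loopless := ⟨fun v h => G.loopless.irrefl v h.1⟩


theorem mem_edgeSet_delV {V : Type*} {G : SimpleGraph V} {s : Set V} {e : Sym2 V} :
    e ∈ (delV G s).edgeSet ↔ e ∈ G.edgeSet ∧ ∀ v ∈ e, v ∉ s := by
  induction e using Sym2.ind with
  | _ a b => simp [delV]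

theorem delV_le {V : Type*} (G : SimpleGraph V) (s : Set V) : delV G s ≤ G :=
  fun _ _ h => h.1

namespace IsMatchingSet

variable {V : Type*} {G : SimpleGraph V} {M : Finset (Sym2 V)}

theorem eq_of_mem_of_mem (hM : IsMatchingSet G M) {e f : Sym2 V} (he : e ∈ M) (hf : f ∈ M)
    {v : V} (hve : v ∈ e) (hvf : v ∈ f) : e = f := by
  by_contra hef
  exact hM.2 e he f hf hef v hve hvf

theorem mono_s10 {G' : SimpleGraph V} (hG : G ≤ G') (hM : IsMatchingSet G M) :
    IsMatchingSet G' M :=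
  ⟨fun e he => SimpleGraph.edgeSet_subset_edgeSet.2 hG (hM.1 e he), hM.2⟩

theorem subset (hM : IsMatchingSet G M) {M' : Finset (Sym2 V)} (h : M' ⊆ M) :
    IsMatchingSet G M' :=
  ⟨fun e he => hM.1 e (h he), fun e he f hf => hM.2 e (h he) f (h hf)⟩

theorem isMatchingSet_delV {s : Set V} (hM : IsMatchingSet G M)
    (hs : ∀ e ∈ M, ∀ v ∈ e, v ∉ s) : IsMatchingSet (delV G s) M :=
  ⟨fun e he => mem_edgeSet_delV.2 ⟨hM.1 e he, hs e he⟩, hM.2⟩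

theorem avoid_of_mem [DecidableEq V] (hM : IsMatchingSet G M) {u v : V} (huv : s(u, v) ∈ M) :
    ∀ e ∈ M.erase s(u, v), u ∉ e ∧ v ∉ e := by
  intro e he
  have hne := Finset.ne_of_mem_erase he
  have heM := Finset.mem_of_mem_erase he
  exact ⟨fun hu => hne (hM.eq_of_mem_of_mem heM huv hu (Sym2.mem_mk_left u v)),
    fun hv => hne (hM.eq_of_mem_of_mem heM huv hv (Sym2.mem_mk_right u v))⟩

theorem insert [DecidableEq V] (hM : IsMatchingSet G M) {u v : V} (huv : G.Adj u v)
    (hfree : ∀ e ∈ M, u ∉ e ∧ v ∉ e) : IsMatchingSet G (insert s(u, v) M) := by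
  refine ⟨fun e he => ?_, fun e he f hf hef w hwe hwf => ?_⟩
  · rcases Finset.mem_insert.1 he with rfl | heM
    exacts [huv, hM.1 e heM]
  · rcases Finset.mem_insert.1 he with rfl | heM <;> rcases Finset.mem_insert.1 hf with rfl | hfM
    · exact hef rfl
    · rcases Sym2.mem_iff.1 hwe with rfl | rfl
      exacts [(hfree f hfM).1 hwf, (hfree f hfM).2 hwf]
    · rcases Sym2.mem_iff.1 hwf with rfl | rfl
      exacts [(hfree e heM).1 hwe, (hfree e heM).2 hwe]
    · exact hM.2 e heM f hfM hef w hwe hwf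

theorem mk_mem_of_degree_eq_one (hM : IsMatchingSet G M) {v w : V}
    [Fintype (G.neighborSet v)] (hleaf : G.degree v = 1) (hadj : G.Adj w v)
    {e : Sym2 V} (he : e ∈ M) (hve : v ∈ e) : s(w, v) ∈ M := by
  obtain ⟨u, rfl⟩ : ∃ u, e = s(v, u) := ⟨Sym2.Mem.other hve, (Sym2.other_spec hve).symm⟩
  obtain ⟨w', -, huniq⟩ := SimpleGraph.degree_eq_one_iff_existsUnique_adj.1 hleaf
  have hvu : G.Adj v u := hM.1 _ he
  rwa [huniq w hadj.symm, ← huniq u hvu, Sym2.eq_swap]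

end IsMatchingSet

section SquarefreePower

variable {V : Type*} [Fintype V] [DecidableEq V]

def coveredVerts (M : Finset (Sym2 V)) : Finset V :=
  Finset.univ.filter fun v => ∃ e ∈ M, v ∈ e

theorem mem_coveredVerts {M : Finset (Sym2 V)} {v : V} :
    v ∈ coveredVerts M ↔ ∃ e ∈ M, v ∈ e := by
  simp [coveredVerts]

theorem coveredVerts_insert (M : Finset (Sym2 V)) (u v : V) :
    coveredVerts (insert s(u, v) M) = insert u (insert v (coveredVerts M)) := by
  ext w
  simp only [mem_coveredVerts, Finset.mem_insert, exists_eq_or_imp, Sym2.mem_iff, or_assoc]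

def matchingMonomial (R : Type*) [CommSemiring R] (M : Finset (Sym2 V)) : MvPolynomial V R :=
  ∏ v ∈ coveredVerts M, X v

theorem matchingMonomial_insert (R : Type*) [CommSemiring R] {M : Finset (Sym2 V)} {u v : V}
    (huv : u ≠ v) (hfree : ∀ e ∈ M, u ∉ e ∧ v ∉ e) :
    matchingMonomial R (insert s(u, v) M) = X u * X v * matchingMonomial R M := by
  have hv : v ∉ coveredVerts M := fun h => by
    obtain ⟨e, he, hve⟩ := mem_coveredVerts.1 h
    exact (hfree e he).2 hve
  have hu : u ∉ insert v (coveredVerts M) := by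
    rw [Finset.mem_insert, mem_coveredVerts, not_or, not_exists]
    exact ⟨huv, fun e ⟨he, hue⟩ => (hfree e he).1 hue⟩
  rw [matchingMonomial, coveredVerts_insert, Finset.prod_insert hu, Finset.prod_insert hv,
    mul_assoc, matchingMonomial]

end SquarefreePower

section EdgeIdealSqPow

variable {K : Type*} [Field K] {n : ℕ}

theorem edgeIdealSqPow_eq_span (G : SimpleGraph (Fin n)) (k : ℕ) :
    edgeIdealSqPow K G k = Ideal.span {f | ∃ M : Finset (Sym2 (Fin n)), IsMatchingSet G M ∧
      M.card = k ∧ f = matchingMonomial K M} :=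
  rfl

theorem edgeIdealSqPow_le_iff {G : SimpleGraph (Fin n)} {k : ℕ}
    {I : Ideal (MvPolynomial (Fin n) K)} :
    edgeIdealSqPow K G k ≤ I ↔
      ∀ M : Finset (Sym2 (Fin n)), IsMatchingSet G M → M.card = k → matchingMonomial K M ∈ I := by
  simp only [edgeIdealSqPow_eq_span, Ideal.span_le, Set.subset_def, Set.mem_ofPred_eq,
    SetLike.mem_coe]
  constructor
  · exact fun h M hM hk => h _ ⟨M, hM, hk, rfl⟩
  · rintro h _ ⟨M, hM, hk, rfl⟩
    exact h M hM hk

theorem matchingMonomial_mem_edgeIdealSqPow {G : SimpleGraph (Fin n)}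
    {M : Finset (Sym2 (Fin n))} (hM : IsMatchingSet G M) :
    matchingMonomial K M ∈ edgeIdealSqPow K G M.card :=
  Ideal.subset_span ⟨M, hM, rfl, rfl⟩

theorem edgeIdealSqPow_mono {G G' : SimpleGraph (Fin n)} (hG : G ≤ G') (k : ℕ) :
    edgeIdealSqPow K G k ≤ edgeIdealSqPow K G' k :=
  edgeIdealSqPow_le_iff.2 fun _ hM hk => hk ▸ matchingMonomial_mem_edgeIdealSqPow (hM.mono_s10 hG)

theorem span_mul_edgeIdealSqPow_delV_le {G : SimpleGraph (Fin n)} {u v : Fin n}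
    (huv : G.Adj u v) {k : ℕ} (hk : 1 ≤ k) :
    Ideal.span {(X u * X v : MvPolynomial (Fin n) K)} *
        edgeIdealSqPow K (delV G {u, v}) (k - 1) ≤ edgeIdealSqPow K G k := by
  suffices edgeIdealSqPow K (delV G {u, v}) (k - 1) ≤
      (edgeIdealSqPow K G k).colon {X u * X v} by
    rw [Ideal.span_singleton_mul_le_iff]
    intro z hz
    simpa [mul_comm] using Submodule.mem_colon_singleton.1 (this hz)
  refine edgeIdealSqPow_le_iff.2 fun M hM hcard => ?_
  have hfree : ∀ e ∈ M, u ∉ e ∧ v ∉ e := fun e he =>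
    ⟨fun hu => (mem_edgeSet_delV.1 (hM.1 e he)).2 u hu (by simp),
      fun hv => (mem_edgeSet_delV.1 (hM.1 e he)).2 v hv (by simp)⟩
  have hnotin : s(u, v) ∉ M := fun h => (hfree _ h).1 (Sym2.mem_mk_left u v)
  have hins := (hM.mono_s10 (delV_le G _)).insert huv hfree
  rw [Submodule.mem_colon_singleton, smul_eq_mul, mul_comm,
    ← matchingMonomial_insert K huv.ne hfree]
  convert matchingMonomial_mem_edgeIdealSqPow hins using 1
  rw [Finset.card_insert_of_notMem hnotin, hcard, Nat.sub_add_cancel hk]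

theorem edgeIdealSqPow_le_sup_of_degree_eq_one {G : SimpleGraph (Fin n)} [DecidableRel G.Adj]
    {v w : Fin n} (hadj : G.Adj w v) (hleaf : G.degree v = 1) (k : ℕ) :
    edgeIdealSqPow K G k ≤
      edgeIdealSqPow K (delV G {v}) k ⊔
        Ideal.span {(X v * X w : MvPolynomial (Fin n) K)} *
          edgeIdealSqPow K (delV G {v, w}) (k - 1) := by
  refine edgeIdealSqPow_le_iff.2 fun M hM hcard => ?_
  by_cases hcov : ∃ e ∈ M, v ∈ e
  · obtain ⟨e, he, hve⟩ := hcov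
    have hwv : s(w, v) ∈ M := hM.mk_mem_of_degree_eq_one hleaf hadj he hve
    have hfree := hM.avoid_of_mem hwv
    have hM' : IsMatchingSet (delV G {v, w}) (M.erase s(w, v)) :=
      (hM.subset (Finset.erase_subset _ _)).isMatchingSet_delV fun e he x hx hxs => by
        rcases hxs with rfl | rfl
        exacts [(hfree e he).2 hx, (hfree e he).1 hx]
    rw [← Finset.insert_erase hwv, matchingMonomial_insert K hadj.ne hfree, mul_comm (X w)]
    refine Ideal.mem_sup_right (Ideal.mul_mem_mul (Ideal.mem_span_singleton_self _) ?_)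
    simpa [Finset.card_erase_of_mem hwv, hcard] using matchingMonomial_mem_edgeIdealSqPow hM'
  · refine Ideal.mem_sup_left (hcard ▸ matchingMonomial_mem_edgeIdealSqPow
      (hM.isMatchingSet_delV fun e he x hx hxv => ?_))
    exact hcov ⟨e, he, (Set.mem_singleton_iff.1 hxv) ▸ hx⟩

end EdgeIdealSqPow

theorem stmt_10_general (K : Type*) [Field K] {n : ℕ}
    (G : SimpleGraph (Fin n)) [DecidableRel G.Adj]
    (vn vw : Fin n)
    (hadj : G.Adj vw vn) (hleaf : G.degree vn = 1)
    (k : ℕ) (h1 : 1 ≤ k) :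
    edgeIdealSqPow K G k =
      edgeIdealSqPow K (delV G {vn}) k ⊔
        Ideal.span {(X vn * X vw : MvPolynomial (Fin n) K)} *
          edgeIdealSqPow K (delV G {vn, vw}) (k - 1) :=
  le_antisymm (edgeIdealSqPow_le_sup_of_degree_eq_one hadj hleaf k)
    (sup_le (edgeIdealSqPow_mono (delV_le G _) k) (span_mul_edgeIdealSqPow_delV_le hadj.symm h1))

/-- Let `G` be a forest with distant leaf `vn` (the last vertex) and distant edge
`{vw, vn}`. With `G₁ = G - vn` and `G₂ = G - {vn, vw}`, for all `1 ≤ k ≤ ν(G)`,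
`I(G)^{[k]} = I(G₁)^{[k]} + x_{vn} x_{vw} · I(G₂)^{[k-1]}` (with `I(G₂)^{[0]} = (1)`). -/
theorem stmt_10 (K : Type*) [Field K] {n : ℕ} (hn : 2 ≤ n)
    (G : SimpleGraph (Fin n)) [DecidableRel G.Adj] (hforest : G.IsAcyclic)
    (vn vw : Fin n) (hvn : (vn : ℕ) = n - 1) (hvw : (vw : ℕ) = n - 2)
    (hadj : G.Adj vw vn) (hleaf : G.degree vn = 1)
    (hdistant : ((G.neighborFinset vw).filter (fun u => G.degree u ≠ 1)).card ≤ 1)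
    (k : ℕ) (h1 : 1 ≤ k) (h2 : k ≤ matchingNumber G) :
    edgeIdealSqPow K G k =
      edgeIdealSqPow K (delV G {vn}) k ⊔
        Ideal.span {(X vn * X vw : MvPolynomial (Fin n) K)} *
          edgeIdealSqPow K (delV G {vn, vw}) (k - 1) :=
  stmt_10_general K G vn vw hadj hleaf k h1
end
end
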